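/- arXiv:2101.03773 — 2 statements merged into one kernel-verified Lean document; each statement's English description precedes it below -/
import Mathlib

section
/- For every t > 0 and y > 0, and exponents p, q > 1 with 1/p + 1/q = 1 and q < 2 < p, the integral ∫_0^∞ e^{-t v²} v^{1/p − 1/2} |v − y|^{1/q − 1} dv is bounded by C t^{-1/4} with C independent of t and y. -/
/-!
Write `a = 1/p − 1/2` and `b = 1/q − 1 = −1/p`, so `a, b ∈ (−1/2, 0)` and `a + b = −1/2`.
For a single singularity, `∫ e^{−tv²} |v − y|^c dv ≲ t^{−(c+1)/2}` uniformly in `y` when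
`−1 < c ≤ 0`: on `|v − y| ≤ t^{−1/2}` drop the Gaussian and integrate `|v − y|^c` exactly,
and elsewhere bound `|v − y|^c ≤ t^{−c/2}` and integrate the Gaussian. The two singularities
are separated by the weighted AM–GM inequality `XZ ≤ (λX² + λ⁻¹Z²)/2` with
`λ = t^{(a−b)/2}`, which balances the resulting powers of `t` to `t^{−(a+b+1)/2} = t^{−1/4}`.
-/

open MeasureTheory Real Set

lemma locallyIntegrable_abs_rpow {c : ℝ} (hc : -1 < c) :
    LocallyIntegrable (fun x : ℝ => |x| ^ c) := by
  refine locallyIntegrable_of_norm_le_rpow (C := 1) (α := -c) (by simp) (by simp; linarith)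
    (ae_of_all _ fun x => ?_) (by fun_prop : Measurable _).aestronglyMeasurable
  simp [abs_of_nonneg (rpow_nonneg (abs_nonneg x) c)]

lemma intervalIntegrable_abs_rpow {c : ℝ} (hc : -1 < c) (a b : ℝ) :
    IntervalIntegrable (fun x : ℝ => |x| ^ c) volume a b :=
  intervalIntegrable_iff.mpr <|
    ((locallyIntegrable_abs_rpow hc).integrableOn_isCompact isCompact_uIcc).mono_set
      uIoc_subset_uIcc

lemma integral_abs_rpow_neg_self {c : ℝ} (hc : -1 < c) {r : ℝ} (hr : 0 ≤ r) :
    ∫ x in -r..r, |x| ^ c = 2 * r ^ (c + 1) / (c + 1) := by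
  have right_half : ∫ x in (0 : ℝ)..r, |x| ^ c = r ^ (c + 1) / (c + 1) := by
    rw [intervalIntegral.integral_congr (g := fun x : ℝ => x ^ c), integral_rpow (Or.inl hc),
      zero_rpow (by linarith), sub_zero]
    intro x hx
    rw [uIcc_of_le hr] at hx
    simp only [abs_of_nonneg hx.1]
  have left_half : ∫ x in -r..0, |x| ^ c = ∫ x in (0 : ℝ)..r, |x| ^ c := by
    simpa only [abs_neg, neg_zero] using
      (intervalIntegral.integral_comp_neg (a := 0) (b := r) fun x : ℝ => |x| ^ c).symm
  rw [← intervalIntegral.integral_add_adjacent_intervals (intervalIntegrable_abs_rpow hc _ _)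
    (intervalIntegrable_abs_rpow hc _ _), left_half, right_half]
  ring

lemma integrableOn_abs_sub_rpow_Ioc {c : ℝ} (hc : -1 < c) (y r : ℝ) :
    IntegrableOn (fun v : ℝ => |v - y| ^ c) (Ioc (y - r) (y + r)) :=
  ((intervalIntegrable_abs_rpow hc (-r) r).comp_sub_right y).def'.mono_set <| by
    rw [neg_add_eq_sub, add_comm r]
    exact Ioc_subset_uIoc

lemma integral_abs_sub_rpow_Ioc {c : ℝ} (hc : -1 < c) {r : ℝ} (hr : 0 ≤ r) (y : ℝ) :
    ∫ v in Ioc (y - r) (y + r), |v - y| ^ c = 2 * r ^ (c + 1) / (c + 1) := by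
  rw [← intervalIntegral.integral_of_le (by linarith),
    intervalIntegral.integral_comp_sub_right (fun x : ℝ => |x| ^ c), sub_sub_cancel_left,
    add_sub_cancel_left, integral_abs_rpow_neg_self hc hr]

section GaussianWeight

variable {t c r : ℝ}

lemma exp_neg_mul_sq_mul_abs_sub_rpow_le (ht : 0 ≤ t) (hc : c ≤ 0) (hr : 0 < r) (y v : ℝ) :
    exp (-t * v ^ 2) * |v - y| ^ c ≤
      (Ioc (y - r) (y + r)).indicator (fun v => |v - y| ^ c) v + r ^ c * exp (-t * v ^ 2) := by
  by_cases hv : v ∈ Ioc (y - r) (y + r)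
  · have hexp : exp (-t * v ^ 2) ≤ 1 := exp_le_one_iff.mpr (by nlinarith [sq_nonneg v])
    rw [indicator_of_mem hv]
    nlinarith [rpow_nonneg (abs_nonneg (v - y)) c, rpow_nonneg hr.le c, exp_pos (-t * v ^ 2)]
  · have hfar : r ≤ |v - y| := by
      simp only [mem_Ioc, not_and_or, not_lt, not_le] at hv
      rcases hv with hv | hv
      · exact le_abs.mpr (Or.inr (by linarith))
      · exact le_abs.mpr (Or.inl (by linarith))
    rw [indicator_of_notMem hv, zero_add, mul_comm]
    exact mul_le_mul_of_nonneg_right (rpow_le_rpow_of_nonpos hr hfar hc) (exp_pos _).le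

lemma integrable_abs_sub_rpow_indicator_add_exp (ht : 0 < t) (hc : -1 < c) (y : ℝ) :
    Integrable fun v : ℝ =>
      (Ioc (y - r) (y + r)).indicator (fun v => |v - y| ^ c) v + r ^ c * exp (-t * v ^ 2) :=
  ((integrableOn_abs_sub_rpow_Ioc hc y r).integrable_indicator measurableSet_Ioc).add
    ((integrable_exp_neg_mul_sq ht).const_mul _)

lemma integrable_exp_neg_mul_sq_mul_abs_sub_rpow (ht : 0 < t) (hc : -1 < c) (hc' : c ≤ 0)
    (y : ℝ) : Integrable fun v : ℝ => exp (-t * v ^ 2) * |v - y| ^ c := by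
  refine (integrable_abs_sub_rpow_indicator_add_exp (r := 1) ht hc y).mono'
    (by fun_prop : Measurable _).aestronglyMeasurable (ae_of_all _ fun v => ?_)
  rw [norm_of_nonneg (by positivity)]
  exact exp_neg_mul_sq_mul_abs_sub_rpow_le ht.le hc' one_pos y v

theorem integral_exp_neg_mul_sq_mul_abs_sub_rpow_le (ht : 0 < t) (hc : -1 < c) (hc' : c ≤ 0)
    (y : ℝ) :
    ∫ v, exp (-t * v ^ 2) * |v - y| ^ c ≤ (2 / (c + 1) + √π) * t ^ (-(c + 1) / 2) := by
  set r : ℝ := t ^ (-(1 / 2 : ℝ))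
  have hr : 0 < r := rpow_pos_of_pos ht _
  have local_part : r ^ (c + 1) = t ^ (-(c + 1) / 2) := by
    rw [← rpow_mul ht.le]; ring_nf
  have tail_part : r ^ c * √(π / t) = √π * t ^ (-(c + 1) / 2) := by
    rw [sqrt_div pi_pos.le, sqrt_eq_rpow t, ← rpow_mul ht.le, mul_div_left_comm, ← rpow_sub ht]
    ring_nf
  calc ∫ v, exp (-t * v ^ 2) * |v - y| ^ c
      ≤ ∫ v, ((Ioc (y - r) (y + r)).indicator (fun v => |v - y| ^ c) v
          + r ^ c * exp (-t * v ^ 2)) :=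
        integral_mono (integrable_exp_neg_mul_sq_mul_abs_sub_rpow ht hc hc' y)
          (integrable_abs_sub_rpow_indicator_add_exp ht hc y)
          (exp_neg_mul_sq_mul_abs_sub_rpow_le ht.le hc' hr y)
    _ = 2 * r ^ (c + 1) / (c + 1) + r ^ c * √(π / t) := by
      rw [integral_add ((integrableOn_abs_sub_rpow_Ioc hc y r).integrable_indicator
          measurableSet_Ioc) ((integrable_exp_neg_mul_sq ht).const_mul _),
        integral_indicator measurableSet_Ioc, integral_abs_sub_rpow_Ioc hc hr.le y,
        integral_const_mul, integral_gaussian]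
    _ = (2 / (c + 1) + √π) * t ^ (-(c + 1) / 2) := by
      rw [local_part, tail_part]; ring

end GaussianWeight

lemma mul_le_add_weighted_sq {l : ℝ} (hl : 0 < l) (X Z : ℝ) :
    X * Z ≤ (l * X ^ 2 + l⁻¹ * Z ^ 2) / 2 := by
  have hsq : 0 ≤ l⁻¹ * (l * X - Z) ^ 2 := by positivity
  have hexpand : l⁻¹ * (l * X - Z) ^ 2 = l * X ^ 2 + l⁻¹ * Z ^ 2 - 2 * (X * Z) := by
    field_simp; ring
  linarith

lemma abs_rpow_sq (u a : ℝ) : (|u| ^ a) ^ 2 = |u| ^ (2 * a) := by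
  rw [← rpow_natCast, ← rpow_mul (abs_nonneg u)]; ring_nf

section TwoSingularities

variable {t a b : ℝ}

lemma exp_mul_abs_sub_rpow_mul_abs_sub_rpow_le {l : ℝ} (hl : 0 < l) (x y v : ℝ) :
    exp (-t * v ^ 2) * |v - x| ^ a * |v - y| ^ b ≤
      l / 2 * (exp (-t * v ^ 2) * |v - x| ^ (2 * a))
        + l⁻¹ / 2 * (exp (-t * v ^ 2) * |v - y| ^ (2 * b)) := by
  have hAMGM := mul_le_add_weighted_sq hl (|v - x| ^ a) (|v - y| ^ b)
  rw [abs_rpow_sq, abs_rpow_sq] at hAMGM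
  calc exp (-t * v ^ 2) * |v - x| ^ a * |v - y| ^ b
      = exp (-t * v ^ 2) * (|v - x| ^ a * |v - y| ^ b) := mul_assoc _ _ _
    _ ≤ exp (-t * v ^ 2) * ((l * |v - x| ^ (2 * a) + l⁻¹ * |v - y| ^ (2 * b)) / 2) :=
      mul_le_mul_of_nonneg_left hAMGM (exp_pos _).le
    _ = _ := by ring

variable (ht : 0 < t) (ha : -(1 / 2) < a) (ha' : a ≤ 0) (hb : -(1 / 2) < b) (hb' : b ≤ 0)
include ht ha ha' hb hb'

lemma integrable_exp_mul_abs_sub_rpow_mul_abs_sub_rpow (x y : ℝ) :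
    Integrable fun v : ℝ => exp (-t * v ^ 2) * |v - x| ^ a * |v - y| ^ b := by
  have hx := integrable_exp_neg_mul_sq_mul_abs_sub_rpow (c := 2 * a) ht (by linarith)
    (by linarith) x
  have hy := integrable_exp_neg_mul_sq_mul_abs_sub_rpow (c := 2 * b) ht (by linarith)
    (by linarith) y
  refine ((hx.const_mul (1 / 2)).add (hy.const_mul (1⁻¹ / 2))).mono'
    (by fun_prop : Measurable _).aestronglyMeasurable (ae_of_all _ fun v => ?_)
  rw [norm_of_nonneg (by positivity)]
  exact exp_mul_abs_sub_rpow_mul_abs_sub_rpow_le one_pos x y v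

theorem integral_exp_mul_abs_sub_rpow_mul_abs_sub_rpow_le (x y : ℝ) :
    ∫ v, exp (-t * v ^ 2) * |v - x| ^ a * |v - y| ^ b ≤
      ((2 / (2 * a + 1) + 2 / (2 * b + 1)) / 2 + √π) * t ^ (-(a + b + 1) / 2) := by
  set l : ℝ := t ^ ((a - b) / 2)
  have hl : 0 < l := rpow_pos_of_pos ht _
  have hx := integrable_exp_neg_mul_sq_mul_abs_sub_rpow (c := 2 * a) ht (by linarith)
    (by linarith) x
  have hy := integrable_exp_neg_mul_sq_mul_abs_sub_rpow (c := 2 * b) ht (by linarith)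
    (by linarith) y
  have balance_x : l * t ^ (-(2 * a + 1) / 2) = t ^ (-(a + b + 1) / 2) := by
    rw [← rpow_add ht]; ring_nf
  have balance_y : l⁻¹ * t ^ (-(2 * b + 1) / 2) = t ^ (-(a + b + 1) / 2) := by
    rw [← rpow_neg ht.le, ← rpow_add ht]; ring_nf
  calc ∫ v, exp (-t * v ^ 2) * |v - x| ^ a * |v - y| ^ b
      ≤ ∫ v, (l / 2 * (exp (-t * v ^ 2) * |v - x| ^ (2 * a))
          + l⁻¹ / 2 * (exp (-t * v ^ 2) * |v - y| ^ (2 * b))) :=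
        integral_mono (integrable_exp_mul_abs_sub_rpow_mul_abs_sub_rpow ht ha ha' hb hb' x y)
          ((hx.const_mul _).add (hy.const_mul _))
          (exp_mul_abs_sub_rpow_mul_abs_sub_rpow_le hl x y)
    _ = l / 2 * (∫ v, exp (-t * v ^ 2) * |v - x| ^ (2 * a))
          + l⁻¹ / 2 * ∫ v, exp (-t * v ^ 2) * |v - y| ^ (2 * b) := by
      rw [integral_add (hx.const_mul _) (hy.const_mul _), integral_const_mul, integral_const_mul]
    _ ≤ l / 2 * ((2 / (2 * a + 1) + √π) * t ^ (-(2 * a + 1) / 2))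
          + l⁻¹ / 2 * ((2 / (2 * b + 1) + √π) * t ^ (-(2 * b + 1) / 2)) := by
      gcongr
      · exact integral_exp_neg_mul_sq_mul_abs_sub_rpow_le ht (by linarith) (by linarith) x
      · exact integral_exp_neg_mul_sq_mul_abs_sub_rpow_le ht (by linarith) (by linarith) y
    _ = (2 / (2 * a + 1) + √π) / 2 * (l * t ^ (-(2 * a + 1) / 2))
          + (2 / (2 * b + 1) + √π) / 2 * (l⁻¹ * t ^ (-(2 * b + 1) / 2)) := by ring
    _ = ((2 / (2 * a + 1) + 2 / (2 * b + 1)) / 2 + √π) * t ^ (-(a + b + 1) / 2) := by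
      rw [balance_x, balance_y]; ring

end TwoSingularities

theorem singular_gaussian_bound_general (p q : ℝ) (hp : 2 < p)
    (hpq : 1 / p + 1 / q = 1) :
    ∃ C : ℝ, 0 < C ∧ ∀ t y : ℝ, 0 < t → 0 < y →
      (∫ v in Set.Ioi (0 : ℝ),
          Real.exp (-t * v ^ 2) * v ^ (1 / p - 1 / 2) * |v - y| ^ (1 / q - 1)) ≤
        C * t ^ (-(1 / 4 : ℝ)) := by
  set a := 1 / p - 1 / 2 with ha_def
  set b := 1 / q - 1 with hb_def
  have hb_eq : b = -(1 / p) := by linarith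
  have hp_inv : 0 < 1 / p ∧ 1 / p < 1 / 2 :=
    ⟨by positivity, one_div_lt_one_div_of_lt two_pos hp⟩
  have ha : -(1 / 2) < a ∧ a ≤ 0 := ⟨by linarith, by linarith⟩
  have hb : -(1 / 2) < b ∧ b ≤ 0 := ⟨by linarith, by linarith⟩
  have hexp : -(a + b + 1) / 2 = -(1 / 4 : ℝ) := by linarith
  refine ⟨(2 / (2 * a + 1) + 2 / (2 * b + 1)) / 2 + √π,
    add_pos (half_pos (add_pos (div_pos two_pos (by linarith)) (div_pos two_pos (by linarith))))
      (sqrt_pos.mpr pi_pos),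
    fun t y ht _ => ?_⟩
  have hint := integrable_exp_mul_abs_sub_rpow_mul_abs_sub_rpow ht ha.1 ha.2 hb.1 hb.2 0 y
  calc ∫ v in Ioi (0 : ℝ), exp (-t * v ^ 2) * v ^ a * |v - y| ^ b
      = ∫ v in Ioi (0 : ℝ), exp (-t * v ^ 2) * |v - 0| ^ a * |v - y| ^ b :=
        setIntegral_congr_fun measurableSet_Ioi fun v hv => by
          rw [sub_zero, abs_of_pos (mem_Ioi.mp hv)]
    _ ≤ ∫ v, exp (-t * v ^ 2) * |v - 0| ^ a * |v - y| ^ b :=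
        setIntegral_le_integral hint (ae_of_all _ fun v => by positivity)
    _ ≤ _ := by
      rw [← hexp]
      exact integral_exp_mul_abs_sub_rpow_mul_abs_sub_rpow_le ht ha.1 ha.2 hb.1 hb.2 0 y

/-- For conjugate exponents `1 < q < 2 < p`, the singular Gaussian integral
`∫_0^∞ e^{-t v²} v^{1/p − 1/2} |v − y|^{1/q − 1} dv` is bounded by `C t^{-1/4}`
uniformly in `t > 0` and `y > 0`. -/
theorem singular_gaussian_bound (p q : ℝ) (hq1 : 1 < q) (hq2 : q < 2) (hp : 2 < p)
    (hpq : 1 / p + 1 / q = 1) :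
    ∃ C : ℝ, 0 < C ∧ ∀ t y : ℝ, 0 < t → 0 < y →
      (∫ v in Set.Ioi (0 : ℝ),
          Real.exp (-t * v ^ 2) * v ^ (1 / p - 1 / 2) * |v - y| ^ (1 / q - 1)) ≤
        C * t ^ (-(1 / 4 : ℝ)) :=
  singular_gaussian_bound_general p q hp hpq
end

section
/- For every t > 0, ∬_{Ω} |s − ξ|^{-1/2} e^{-8 t v (u − ξ)} du dv ≤ C t^{-3/4}, where Ω = {s = u + iv : v > 0, u > ξ + v} and C is an absolute constant. -/
/-!
Write `x = u - ξ`. On the region `x > v` we have `|s - ξ|^{-1/2} ≤ x^{-1/2}` and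
`e^{-8tvx} ≤ e^{-4tv²} e^{-4tvx}`, so the inner integral is at most the Gamma integral
`e^{-4tv²} ∫₀^∞ x^{-1/2} e^{-4tvx} dx = Γ(1/2) (4tv)^{-1/2} e^{-4tv²}`. Integrating in `v`
gives a second Gamma integral, `∫₀^∞ v^{-1/2} e^{-4tv²} dv = Γ(1/4) (4t)^{-1/4} / 2`, hence the
bound `Γ(1/2) Γ(1/4) (4t)^{-3/4} / 2`.
-/

open MeasureTheory Real Set

theorem integral_Ioi_comp_sub {E : Type*} [NormedAddCommGroup E] [NormedSpace ℝ E]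
    (f : ℝ → E) (a c : ℝ) :
    ∫ u in Ioi (c + a), f (u - c) = ∫ x in Ioi a, f x := by
  have hpre : (· - c) ⁻¹' Ioi a = Ioi (c + a) := by
    ext u; simp only [mem_preimage, mem_Ioi, lt_sub_iff_add_lt']
  rw [← hpre]
  exact (measurePreserving_sub_right volume c).setIntegral_preimage_emb
    (measurableEmbedding_subRight c) f _

theorem integrableOn_Ioi_rpow_mul_exp_neg_mul {q b : ℝ} (hq : -1 < q) (hb : 0 < b) :
    IntegrableOn (fun x : ℝ => x ^ q * exp (-b * x)) (Ioi 0) := by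
  simpa using integrableOn_rpow_mul_exp_neg_mul_rpow hq one_pos hb

theorem integral_Ioi_rpow_mul_exp_neg_mul {q b : ℝ} (hq : -1 < q) (hb : 0 < b) :
    ∫ x in Ioi 0, x ^ q * exp (-b * x) = b ^ (-(q + 1)) * Gamma (q + 1) := by
  simpa using integral_rpow_mul_exp_neg_mul_rpow one_pos hq hb

theorem integral_Ioi_rpow_mul_exp_neg_mul_sq {q b : ℝ} (hq : -1 < q) (hb : 0 < b) :
    ∫ x in Ioi 0, x ^ q * exp (-b * x ^ 2) =
      b ^ (-(q + 1) / 2) * (1 / 2) * Gamma ((q + 1) / 2) := by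
  simpa using integral_rpow_mul_exp_neg_mul_rpow two_pos hq hb

theorem rpow_neg_sq_add_sq_le {x : ℝ} (hx : 0 < x) (y : ℝ) {p : ℝ} (hp : 0 ≤ p) :
    (x ^ 2 + y ^ 2) ^ (-p) ≤ x ^ (-(2 * p)) := by
  calc (x ^ 2 + y ^ 2) ^ (-p) ≤ (x ^ 2) ^ (-p) :=
        rpow_le_rpow_of_nonpos (by positivity) (by nlinarith [sq_nonneg y]) (by linarith)
    _ = x ^ (-(2 * p)) := by
        rw [← rpow_natCast, ← rpow_mul hx.le]; norm_num

theorem integral_Ioi_rpow_sq_add_sq_mul_exp_le {t v : ℝ} (ht : 0 < t) (hv : 0 < v) :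
    ∫ x in Ioi v, (x ^ 2 + v ^ 2) ^ (-(1 / 4 : ℝ)) * exp (-8 * t * v * x) ≤
      Gamma (1 / 2) * (4 * t) ^ (-(1 / 2 : ℝ)) *
        (v ^ (-(1 / 2 : ℝ)) * exp (-(4 * t) * v ^ 2)) := by
  have hb : 0 < 4 * t * v := by positivity
  set g : ℝ → ℝ := fun x => x ^ (-(1 / 2 : ℝ)) * exp (-(4 * t * v) * x) with hg
  have hg_int : IntegrableOn g (Ioi 0) :=
    integrableOn_Ioi_rpow_mul_exp_neg_mul (by norm_num) hb
  have hg_nonneg : ∀ x ∈ Ioi (0 : ℝ), 0 ≤ g x := fun x hx =>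
    mul_nonneg (rpow_nonneg (le_of_lt hx) _) (exp_nonneg _)
  have hpt : ∀ x ∈ Ioi v, (x ^ 2 + v ^ 2) ^ (-(1 / 4 : ℝ)) * exp (-8 * t * v * x) ≤
      exp (-(4 * t) * v ^ 2) * g x := by
    intro x (hx : v < x)
    have hx0 : 0 < x := hv.trans hx
    have hdecay : exp (-8 * t * v * x) ≤ exp (-(4 * t) * v ^ 2) * exp (-(4 * t * v) * x) := by
      rw [← exp_add, exp_le_exp]
      nlinarith [mul_le_mul_of_nonneg_left hx.le hb.le]
    calc (x ^ 2 + v ^ 2) ^ (-(1 / 4 : ℝ)) * exp (-8 * t * v * x)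
        ≤ x ^ (-(1 / 2 : ℝ)) * (exp (-(4 * t) * v ^ 2) * exp (-(4 * t * v) * x)) := by
          refine mul_le_mul ?_ hdecay (exp_nonneg _) (rpow_nonneg hx0.le _)
          have h := rpow_neg_sq_add_sq_le hx0 v (p := 1 / 4) (by norm_num)
          rwa [show 2 * (1 / 4 : ℝ) = 1 / 2 by norm_num] at h
      _ = exp (-(4 * t) * v ^ 2) * g x := by ring
  calc ∫ x in Ioi v, (x ^ 2 + v ^ 2) ^ (-(1 / 4 : ℝ)) * exp (-8 * t * v * x)
      ≤ ∫ x in Ioi v, exp (-(4 * t) * v ^ 2) * g x :=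
        integral_mono_of_nonneg
          (ae_of_all _ fun x => mul_nonneg (rpow_nonneg (by positivity) _) (exp_nonneg _))
          ((hg_int.mono_set (Ioi_subset_Ioi hv.le)).const_mul _)
          ((ae_restrict_iff' measurableSet_Ioi).2 (ae_of_all _ hpt))
    _ = exp (-(4 * t) * v ^ 2) * ∫ x in Ioi v, g x := integral_const_mul _ _
    _ ≤ exp (-(4 * t) * v ^ 2) * ∫ x in Ioi 0, g x :=
        mul_le_mul_of_nonneg_left (setIntegral_mono_set hg_int
          ((ae_restrict_iff' measurableSet_Ioi).2 (ae_of_all _ hg_nonneg))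
          (Ioi_subset_Ioi hv.le).eventuallyLE) (exp_nonneg _)
    _ = Gamma (1 / 2) * (4 * t) ^ (-(1 / 2 : ℝ)) *
          (v ^ (-(1 / 2 : ℝ)) * exp (-(4 * t) * v ^ 2)) := by
        rw [hg, integral_Ioi_rpow_mul_exp_neg_mul (by norm_num) hb,
          mul_rpow (by positivity) hv.le]
        norm_num
        ring

theorem integral_Ioi_integral_Ioi_rpow_sq_add_sq_mul_exp_le {t : ℝ} (ht : 0 < t) (ξ : ℝ) :
    ∫ v in Ioi (0 : ℝ), ∫ u in Ioi (ξ + v),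
        ((u - ξ) ^ 2 + v ^ 2) ^ (-(1 / 4 : ℝ)) * exp (-8 * t * v * (u - ξ)) ≤
      Gamma (1 / 2) * Gamma (1 / 4) / 2 * (4 * t) ^ (-(3 / 4 : ℝ)) := by
  have h4t : 0 < 4 * t := by positivity
  have hinner : ∀ v ∈ Ioi (0 : ℝ), ∫ u in Ioi (ξ + v),
      ((u - ξ) ^ 2 + v ^ 2) ^ (-(1 / 4 : ℝ)) * exp (-8 * t * v * (u - ξ)) ≤
      Gamma (1 / 2) * (4 * t) ^ (-(1 / 2 : ℝ)) *
        (v ^ (-(1 / 2 : ℝ)) * exp (-(4 * t) * v ^ 2)) := fun v hv => by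
    rw [integral_Ioi_comp_sub
      (fun x => (x ^ 2 + v ^ 2) ^ (-(1 / 4 : ℝ)) * exp (-8 * t * v * x))]
    exact integral_Ioi_rpow_sq_add_sq_mul_exp_le ht hv
  calc _ ≤ ∫ v in Ioi (0 : ℝ), Gamma (1 / 2) * (4 * t) ^ (-(1 / 2 : ℝ)) *
          (v ^ (-(1 / 2 : ℝ)) * exp (-(4 * t) * v ^ 2)) :=
        integral_mono_of_nonneg
          (ae_of_all _ fun v => integral_nonneg fun u =>
            mul_nonneg (rpow_nonneg (by positivity) _) (exp_nonneg _))
          ((integrableOn_rpow_mul_exp_neg_mul_sq h4t (by norm_num)).const_mul _)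
          ((ae_restrict_iff' measurableSet_Ioi).2 (ae_of_all _ hinner))
    _ = Gamma (1 / 2) * Gamma (1 / 4) / 2 * (4 * t) ^ (-(3 / 4 : ℝ)) := by
        rw [integral_const_mul, integral_Ioi_rpow_mul_exp_neg_mul_sq (by norm_num) h4t,
          show (-(3 / 4 : ℝ)) = -(1 / 2) + -(-(1 / 2) + 1) / 2 by norm_num, rpow_add h4t]
        norm_num
        ring

/-- `∬_{Ω} |s − ξ|^{-1/2} e^{-8 t v (u − ξ)} du dv ≤ C t^{-3/4}` where
`Ω = {u + iv : v > 0, u > ξ + v}`, with an absolute constant `C`. -/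
theorem dbar_singular_double_integral :
    ∃ C : ℝ, 0 < C ∧ ∀ t ξ : ℝ, 0 < t →
      (∫ v in Set.Ioi (0 : ℝ), ∫ u in Set.Ioi (ξ + v),
          ((u - ξ) ^ 2 + v ^ 2) ^ (-(1 / 4 : ℝ)) * Real.exp (-8 * t * v * (u - ξ))) ≤
        C * t ^ (-(3 / 4 : ℝ)) := by
  refine ⟨Gamma (1 / 2) * Gamma (1 / 4) / 2 * 4 ^ (-(3 / 4 : ℝ)), by positivity,
    fun t ξ ht => ?_⟩
  calc _ ≤ Gamma (1 / 2) * Gamma (1 / 4) / 2 * (4 * t) ^ (-(3 / 4 : ℝ)) :=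
        integral_Ioi_integral_Ioi_rpow_sq_add_sq_mul_exp_le ht ξ
    _ = _ := by rw [mul_rpow (by norm_num) ht.le, mul_assoc]
end
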